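/- arXiv:cs/0609052 — 2 statements merged into one kernel-verified Lean document; each statement's English description precedes it below -/
import Mathlib

section
/- The unification problem for any normal modal logic L with ¬□⊥ ∈ L that has a decidable validity problem for variable-free formulas is decidable: φ is unifiable in L iff one of the finitely many ground substitutions on the variables of φ mapping each variable to ⊤ or ⊥ yields a formula in L. -/
inductive MF : Type where
  | var : Nat → MF
  | bot : MF
  | neg : MF → MF
  | and : MF → MF → MF
  | box : MF → MF

namespace MF
def top : MF := neg bot
def or (φ ψ : MF) : MF := neg (and (neg φ) (neg ψ))
def imp (φ ψ : MF) : MF := or (neg φ) ψ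
def dia (φ : MF) : MF := neg (box (neg φ))
def iff (φ ψ : MF) : MF := and (imp φ ψ) (imp ψ φ)
def subst (σ : Nat → MF) : MF → MF
  | .var n => σ n
  | .bot => .bot
  | .neg φ => .neg (subst σ φ)
  | .and φ ψ => .and (subst σ φ) (subst σ ψ)
  | .box φ => .box (subst σ φ)
end MF

/-- Truth at a point of a Kripke model. -/
def sat {W : Type} (R : W → W → Prop) (V : Nat → W → Prop) : W → MF → Prop
  | x, .var n => V n x
  | _, .bot => False
  | x, .neg φ => ¬ sat R V x φ
  | x, .and φ ψ => sat R V x φ ∧ sat R V x ψ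
  | x, .box φ => ∀ y, R x y → sat R V y φ
namespace MF
/-- Variable-free (ground) formulas. -/
def Ground : MF → Prop
  | .var _ => False
  | .bot => True
  | .neg φ => Ground φ
  | .and φ ψ => Ground φ ∧ Ground ψ
  | .box φ => Ground φ
end MF

/-- Boolean evaluation treating variables and boxed formulas as atoms. -/
def beval (v : MF → Bool) : MF → Bool
  | .bot => false
  | .neg φ => !(beval v φ)
  | .and φ ψ => beval v φ && beval v ψ
  | φ => v φ

/-- Propositional tautologies. -/
def Tautology (φ : MF) : Prop := ∀ v : MF → Bool, beval v φ = true

/-- Normal modal logics. -/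
structure IsNormal (L : Set MF) : Prop where
  taut : ∀ φ, Tautology φ → φ ∈ L
  kax : ∀ φ ψ, MF.imp (MF.box (MF.imp φ ψ)) (MF.imp (MF.box φ) (MF.box ψ)) ∈ L
  mp : ∀ φ ψ, MF.imp φ ψ ∈ L → φ ∈ L → ψ ∈ L
  nec : ∀ φ, φ ∈ L → MF.box φ ∈ L
  subst_mem : ∀ σ φ, φ ∈ L → MF.subst σ φ ∈ L

/-! ### Auxiliary development -/

@[simp] lemma beval_bot (v : MF → Bool) : beval v MF.bot = false := rfl
@[simp] lemma beval_neg (v : MF → Bool) (φ : MF) : beval v (MF.neg φ) = !(beval v φ) := rfl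
@[simp] lemma beval_and (v : MF → Bool) (φ ψ : MF) :
    beval v (MF.and φ ψ) = (beval v φ && beval v ψ) := rfl

section Tauts
variable (a b c d : MF)

lemma taut_refl : Tautology (a.iff a) := by
  intro v
  simp only [MF.iff, MF.imp, MF.or, MF.top, beval_neg, beval_and, beval_bot]
  cases beval v a <;> rfl

lemma taut_iff_mp : Tautology ((a.iff b).imp (a.imp b)) := by
  intro v
  simp only [MF.iff, MF.imp, MF.or, MF.top, beval_neg, beval_and, beval_bot]
  cases beval v a <;> cases beval v b <;> rfl

lemma taut_iff_mpr : Tautology ((a.iff b).imp (b.imp a)) := by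
  intro v
  simp only [MF.iff, MF.imp, MF.or, MF.top, beval_neg, beval_and, beval_bot]
  cases beval v a <;> cases beval v b <;> rfl

lemma taut_imp_antisymm : Tautology ((a.imp b).imp ((b.imp a).imp (a.iff b))) := by
  intro v
  simp only [MF.iff, MF.imp, MF.or, MF.top, beval_neg, beval_and, beval_bot]
  cases beval v a <;> cases beval v b <;> rfl

lemma taut_neg_congr : Tautology ((a.iff b).imp ((a.neg).iff (b.neg))) := by
  intro v
  simp only [MF.iff, MF.imp, MF.or, MF.top, beval_neg, beval_and, beval_bot]
  cases beval v a <;> cases beval v b <;> rfl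

lemma taut_and_congr : Tautology ((a.iff b).imp ((c.iff d).imp ((a.and c).iff (b.and d)))) := by
  intro v
  simp only [MF.iff, MF.imp, MF.or, MF.top, beval_neg, beval_and, beval_bot]
  cases beval v a <;> cases beval v b <;> cases beval v c <;> cases beval v d <;> rfl

lemma taut_neg_top : Tautology ((a.iff MF.top).imp ((a.neg).iff MF.bot)) := by
  intro v
  simp only [MF.iff, MF.imp, MF.or, MF.top, beval_neg, beval_and, beval_bot]
  cases beval v a <;> rfl

lemma taut_neg_bot : Tautology ((a.iff MF.bot).imp ((a.neg).iff MF.top)) := by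
  intro v
  simp only [MF.iff, MF.imp, MF.or, MF.top, beval_neg, beval_and, beval_bot]
  cases beval v a <;> rfl

lemma taut_and_top : Tautology ((a.iff MF.top).imp ((b.iff MF.top).imp ((a.and b).iff MF.top))) := by
  intro v
  simp only [MF.iff, MF.imp, MF.or, MF.top, beval_neg, beval_and, beval_bot]
  cases beval v a <;> cases beval v b <;> rfl

lemma taut_and_botl : Tautology ((a.iff MF.bot).imp ((a.and b).iff MF.bot)) := by
  intro v
  simp only [MF.iff, MF.imp, MF.or, MF.top, beval_neg, beval_and, beval_bot]
  cases beval v a <;> cases beval v b <;> rfl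

lemma taut_and_botr : Tautology ((b.iff MF.bot).imp ((a.and b).iff MF.bot)) := by
  intro v
  simp only [MF.iff, MF.imp, MF.or, MF.top, beval_neg, beval_and, beval_bot]
  cases beval v a <;> cases beval v b <;> rfl

lemma taut_mem_top : Tautology (a.imp (a.iff MF.top)) := by
  intro v
  simp only [MF.iff, MF.imp, MF.or, MF.top, beval_neg, beval_and, beval_bot]
  cases beval v a <;> rfl

lemma taut_top_mem : Tautology ((a.iff MF.top).imp a) := by
  intro v
  simp only [MF.iff, MF.imp, MF.or, MF.top, beval_neg, beval_and, beval_bot]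
  cases beval v a <;> rfl

lemma taut_bot_imp : Tautology ((a.iff MF.bot).imp (a.imp MF.bot)) := by
  intro v
  simp only [MF.iff, MF.imp, MF.or, MF.top, beval_neg, beval_and, beval_bot]
  cases beval v a <;> rfl

lemma taut_contra : Tautology ((a.imp b).imp ((b.neg).imp (a.neg))) := by
  intro v
  simp only [MF.iff, MF.imp, MF.or, MF.top, beval_neg, beval_and, beval_bot]
  cases beval v a <;> cases beval v b <;> rfl

lemma taut_neg_iff_bot : Tautology ((a.neg).imp (a.iff MF.bot)) := by
  intro v
  simp only [MF.iff, MF.imp, MF.or, MF.top, beval_neg, beval_and, beval_bot]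
  cases beval v a <;> rfl

lemma taut_exfalso : Tautology (MF.bot.imp (a.iff MF.top)) := by
  intro v
  simp only [MF.iff, MF.imp, MF.or, MF.top, beval_neg, beval_and, beval_bot]
  rfl

end Tauts

section Logic
variable {L : Set MF} (hL : IsNormal L)
include hL

lemma lmp1 {a b : MF} (h : Tautology (a.imp b)) (ha : a ∈ L) : b ∈ L :=
  hL.mp a b (hL.taut _ h) ha

lemma lmp2 {a b c : MF} (h : Tautology (a.imp (b.imp c))) (ha : a ∈ L) (hb : b ∈ L) : c ∈ L :=
  hL.mp b c (hL.mp a _ (hL.taut _ h) ha) hb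

lemma box_congr {a b : MF} (h : a.iff b ∈ L) : (a.box).iff (b.box) ∈ L := by
  have h1 : a.imp b ∈ L := lmp1 hL (taut_iff_mp a b) h
  have h2 : b.imp a ∈ L := lmp1 hL (taut_iff_mpr a b) h
  have k1 : (a.box).imp (b.box) ∈ L := hL.mp _ _ (hL.kax a b) (hL.nec _ h1)
  have k2 : (b.box).imp (a.box) ∈ L := hL.mp _ _ (hL.kax b a) (hL.nec _ h2)
  exact lmp2 hL (taut_imp_antisymm _ _) k1 k2

lemma subst_congr {σ τ : Nat → MF} (h : ∀ n, (σ n).iff (τ n) ∈ L) (φ : MF) :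
    (MF.subst σ φ).iff (MF.subst τ φ) ∈ L := by
  induction φ with
  | var n => exact h n
  | bot => exact hL.taut _ (taut_refl _)
  | neg φ ih => exact lmp1 hL (taut_neg_congr _ _) ih
  | and φ ψ ih1 ih2 => exact lmp2 hL (taut_and_congr _ _ _ _) ih1 ih2
  | box φ ih => exact box_congr hL ih

lemma ground_dich (hbox : MF.neg (MF.box MF.bot) ∈ L) {ψ : MF} (hg : MF.Ground ψ) :
    ψ.iff MF.top ∈ L ∨ ψ.iff MF.bot ∈ L := by
  induction ψ with
  | var n => exact absurd hg (by simp [MF.Ground])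
  | bot => exact Or.inr (hL.taut _ (taut_refl _))
  | neg φ ih =>
    rcases ih hg with h | h
    · exact Or.inr (lmp1 hL (taut_neg_top _) h)
    · exact Or.inl (lmp1 hL (taut_neg_bot _) h)
  | and φ ψ ih1 ih2 =>
    obtain ⟨hg1, hg2⟩ := hg
    rcases ih1 hg1 with h1 | h1
    · rcases ih2 hg2 with h2 | h2
      · exact Or.inl (lmp2 hL (taut_and_top _ _) h1 h2)
      · exact Or.inr (lmp1 hL (taut_and_botr _ _) h2)
    · exact Or.inr (lmp1 hL (taut_and_botl _ _) h1)
  | box φ ih =>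
    rcases ih hg with h | h
    · exact Or.inl (lmp1 hL (taut_mem_top _) (hL.nec _ (lmp1 hL (taut_top_mem _) h)))
    · have h1 : φ.imp MF.bot ∈ L := lmp1 hL (taut_bot_imp _) h
      have h2 : (φ.box).imp (MF.bot.box) ∈ L := hL.mp _ _ (hL.kax _ _) (hL.nec _ h1)
      have h3 : MF.neg (φ.box) ∈ L := lmp2 hL (taut_contra _ _) h2 hbox
      exact Or.inr (lmp1 hL (taut_neg_iff_bot _) h3)

lemma ground_mem_top (hbox : MF.neg (MF.box MF.bot) ∈ L) {ψ : MF}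
    (hg : MF.Ground ψ) (hψ : ψ ∈ L) : ψ.iff MF.top ∈ L := by
  rcases ground_dich hL hbox hg with h | h
  · exact h
  · have hbotL : MF.bot ∈ L := hL.mp _ _ (lmp1 hL (taut_bot_imp _) h) hψ
    exact lmp1 hL (taut_exfalso _) hbotL

lemma ground_not_mem_bot (hbox : MF.neg (MF.box MF.bot) ∈ L) {ψ : MF}
    (hg : MF.Ground ψ) (hψ : ψ ∉ L) : ψ.iff MF.bot ∈ L := by
  rcases ground_dich hL hbox hg with h | h
  · exact absurd (lmp1 hL (taut_top_mem _) h) hψ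
  · exact h

end Logic

lemma subst_subst (γ σ : Nat → MF) (φ : MF) :
    MF.subst γ (MF.subst σ φ) = MF.subst (fun n => MF.subst γ (σ n)) φ := by
  induction φ <;> simp [MF.subst, *]

lemma ground_subst {σ : Nat → MF} (h : ∀ n, MF.Ground (σ n)) (φ : MF) :
    MF.Ground (MF.subst σ φ) := by
  induction φ with
  | var n => exact h n
  | bot => trivial
  | neg φ ih => exact ih
  | and φ ψ ih1 ih2 => exact ⟨ih1, ih2⟩
  | box φ ih => exact ih

lemma ground_top : MF.Ground MF.top := trivial

/-- Key lemma: unifiability implies ground unifiability. -/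
lemma key_ground_unif {L : Set MF} (hL : IsNormal L) (hbox : MF.neg (MF.box MF.bot) ∈ L)
    (φ : MF) : (∃ σ, MF.subst σ φ ∈ L) ↔
      ∃ σ : Nat → MF, (∀ n, σ n = MF.top ∨ σ n = MF.bot) ∧ MF.subst σ φ ∈ L := by
  constructor
  · rintro ⟨σ, hσ⟩
    classical
    set γ : Nat → MF := fun _ => MF.top with hγ
    set σ' : Nat → MF := fun n => MF.subst γ (σ n) with hσ'
    have hmem : MF.subst σ' φ ∈ L := by
      rw [hσ', ← subst_subst]; exact hL.subst_mem γ _ hσ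
    have hgr : ∀ n, MF.Ground (σ' n) := fun n => ground_subst (fun _ => ground_top) _
    refine ⟨fun n => if σ' n ∈ L then MF.top else MF.bot, fun n => by by_cases h : σ' n ∈ L <;> simp [h], ?_⟩
    have hc : (MF.subst σ' φ).iff (MF.subst (fun n => if σ' n ∈ L then MF.top else MF.bot) φ) ∈ L := by
      refine subst_congr hL (fun n => ?_) φ
      by_cases h : σ' n ∈ L
      · simp only [h, if_true]
        exact ground_mem_top hL hbox (hgr n) h
      · simp only [h, if_false]
        exact ground_not_mem_bot hL hbox (hgr n) h
    exact lmp2 hL (taut_iff_mp _ _) hc hmem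
  · rintro ⟨σ, _, h⟩; exact ⟨σ, h⟩

/-- Variables occurring in a formula. -/
def varsOf : MF → List Nat
  | .var n => [n]
  | .bot => []
  | .neg φ => varsOf φ
  | .and φ ψ => varsOf φ ++ varsOf ψ
  | .box φ => varsOf φ

lemma subst_agree {σ τ : Nat → MF} :
    ∀ φ : MF, (∀ n ∈ varsOf φ, σ n = τ n) → MF.subst σ φ = MF.subst τ φ := by
  intro φ
  induction φ with
  | var n => intro h; exact h n (by simp [varsOf])
  | bot => intro _; rfl
  | neg φ ih => intro h; simp [MF.subst]; exact ih h
  | and φ ψ ih1 ih2 =>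
    intro h
    simp only [MF.subst, MF.and.injEq]
    exact ⟨ih1 fun n hn => h n (by simp [varsOf, hn]),
           ih2 fun n hn => h n (by simp [varsOf, hn])⟩
  | box φ ih => intro h; simp [MF.subst]; exact ih h

/-- All top/bot substitutions over a finite list of variables. -/
def subsOf : List Nat → List (Nat → MF)
  | [] => [fun _ => MF.top]
  | n :: ns => ((subsOf ns).map fun σ m => if m = n then MF.top else σ m) ++
               ((subsOf ns).map fun σ m => if m = n then MF.bot else σ m)

lemma subsOf_ground : ∀ l : List Nat, ∀ σ ∈ subsOf l, ∀ n, σ n = MF.top ∨ σ n = MF.bot := by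
  intro l
  induction l with
  | nil =>
    intro σ hσ n
    simp only [subsOf, List.mem_singleton] at hσ
    subst hσ; exact Or.inl rfl
  | cons m ms ih =>
    intro σ hσ n
    simp only [subsOf, List.mem_append, List.mem_map] at hσ
    rcases hσ with ⟨σ', hσ', rfl⟩ | ⟨σ', hσ', rfl⟩ <;>
      · by_cases h : n = m
        · simp [h]
        · simpa [h] using ih σ' hσ' n

lemma subsOf_complete : ∀ l : List Nat, ∀ τ : Nat → MF,
    (∀ n, τ n = MF.top ∨ τ n = MF.bot) →
    ∃ σ ∈ subsOf l, ∀ n ∈ l, σ n = τ n := by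
  intro l
  induction l with
  | nil => intro τ _; exact ⟨fun _ => MF.top, by simp [subsOf], by simp⟩
  | cons m ms ih =>
    intro τ hτ
    obtain ⟨σ, hmem, hag⟩ := ih τ hτ
    rcases hτ m with h | h
    · refine ⟨fun k => if k = m then MF.top else σ k, ?_, ?_⟩
      · simp only [subsOf, List.mem_append, List.mem_map]
        exact Or.inl ⟨σ, hmem, rfl⟩
      · intro n hn
        by_cases hnm : n = m
        · simp [hnm, h.symm]
        · simp only [if_neg hnm]
          exact hag n (by rcases List.mem_cons.mp hn with h' | h'; exact absurd h' hnm; exact h')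
    · refine ⟨fun k => if k = m then MF.bot else σ k, ?_, ?_⟩
      · simp only [subsOf, List.mem_append, List.mem_map]
        exact Or.inr ⟨σ, hmem, rfl⟩
      · intro n hn
        by_cases hnm : n = m
        · simp [hnm, h.symm]
        · simp only [if_neg hnm]
          exact hag n (by rcases List.mem_cons.mp hn with h' | h'; exact absurd h' hnm; exact h')

/-- for normal L with ¬□⊥ ∈ L, φ is unifiable iff one of the (finitely many,
on the variables of φ) substitutions mapping each variable to ⊤ or ⊥ unifies it; hence,
given a decision procedure for L on variable-free formulas, unifiability is decidable. -/
theorem unification_decidable :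
    ∀ L : Set MF, IsNormal L → MF.neg (MF.box MF.bot) ∈ L →
      (∀ φ : MF, (∃ σ, MF.subst σ φ ∈ L) ↔
        ∃ σ : Nat → MF, (∀ n, σ n = MF.top ∨ σ n = MF.bot) ∧ MF.subst σ φ ∈ L) ∧
      (∀ d : MF → Bool, (∀ ψ, MF.Ground ψ → (ψ ∈ L ↔ d ψ = true)) →
        ∃ u : MF → Bool, ∀ φ, (∃ σ, MF.subst σ φ ∈ L) ↔ u φ = true) := by
  intro L hL hbox
  refine ⟨key_ground_unif hL hbox, ?_⟩
  intro d hd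
  refine ⟨fun φ => (subsOf (varsOf φ)).any fun σ => d (MF.subst σ φ), fun φ => ?_⟩
  rw [List.any_eq_true]
  constructor
  · intro hu
    obtain ⟨τ, hτ, hτL⟩ := (key_ground_unif hL hbox φ).mp hu
    obtain ⟨σ, hσmem, hag⟩ := subsOf_complete (varsOf φ) τ hτ
    have heq : MF.subst σ φ = MF.subst τ φ := subst_agree φ hag
    refine ⟨σ, hσmem, ?_⟩
    have hgr : MF.Ground (MF.subst σ φ) := by
      refine ground_subst (fun n => ?_) φ
      rcases subsOf_ground _ σ hσmem n with h | h <;> rw [h]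
      · exact ground_top
      · trivial
    exact (hd _ hgr).mp (heq ▸ hτL)
  · rintro ⟨σ, hσmem, hdσ⟩
    have hgr : MF.Ground (MF.subst σ φ) := by
      refine ground_subst (fun n => ?_) φ
      rcases subsOf_ground _ σ hσmem n with h | h <;> rw [h]
      · exact ground_top
      · trivial
    exact ⟨σ, (hd _ hgr).mpr hdσ⟩
end

section
/- Let 𝔊 = (W,R,S) be a hybrid frame, x₀ ∈ W with x₀ ⊨ Nom, and define ∃φ := ◇_h(n ∧ ◇_h φ). Then for every formula φ and every point x of distance ≤ 6 from x₀ (along R ∪ S): x₀ ⊨ ∃φ iff x ⊨ ∃φ. -/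
/-- The hybrid language 𝓗₂ with nominals and two boxes □ and □_h. -/
inductive MH : Type where
  | var : Nat → MH
  | nom : Nat → MH
  | bot : MH
  | neg : MH → MH
  | and : MH → MH → MH
  | box : MH → MH
  | boxh : MH → MH

namespace MH
def top : MH := neg bot
def or (φ ψ : MH) : MH := neg (and (neg φ) (neg ψ))
def imp (φ ψ : MH) : MH := or (neg φ) ψ
def dia (φ : MH) : MH := neg (box (neg φ))
def diah (φ : MH) : MH := neg (boxh (neg φ))
/-- ∃φ := ◇_h(n ∧ ◇_h φ), with n the nominal nom 0. -/
def uEx (φ : MH) : MH := diah (and (nom 0) (diah φ))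
end MH

/-- Truth in a hybrid model: N interprets each nominal as (the unique element of) a singleton. -/
def satH {W : Type} (R S : W → W → Prop) (V : Nat → W → Prop) (N : Nat → W) : W → MH → Prop
  | x, .var n => V n x
  | x, .nom i => x = N i
  | _, .bot => False
  | x, .neg φ => ¬ satH R S V N x φ
  | x, .and φ ψ => satH R S V N x φ ∧ satH R S V N x ψ
  | x, .box φ => ∀ y, R x y → satH R S V N y φ
  | x, .boxh φ => ∀ y, S x y → satH R S V N y φ
/-- Prefixing a formula with a sequence of boxes (true ↦ □, false ↦ □_h). -/
def Mbox (l : List Bool) (φ : MH) : MH :=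
  l.foldr (fun b ψ => if b then MH.box ψ else MH.boxh ψ) φ

/-- Prefixing a formula with a sequence of diamonds (true ↦ ◇, false ↦ ◇_h). -/
def Mdia (l : List Bool) (φ : MH) : MH :=
  l.foldr (fun b ψ => if b then MH.dia ψ else MH.diah ψ) φ

/-- x₀ ⊨ Nom: all conjuncts ◇_h n → M◇_h n and M'◇_h n → ◇_h n (lengths ≤ 6) hold at x₀. -/
def SatNom {W : Type} (R S : W → W → Prop) (V : Nat → W → Prop) (N : Nat → W) (x₀ : W) : Prop :=
  ∀ l : List Bool, l.length ≤ 6 →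
    satH R S V N x₀ (MH.imp (MH.diah (MH.nom 0)) (Mbox l (MH.diah (MH.nom 0)))) ∧
    satH R S V N x₀ (MH.imp (Mdia l (MH.diah (MH.nom 0))) (MH.diah (MH.nom 0)))

/-- Chains of length ≤ m along a relation: distance ≤ m. -/
def stepsLE {W : Type} (S' : W → W → Prop) : Nat → W → W → Prop
  | 0, x, y => x = y
  | (m+1), x, y => stepsLE S' m x y ∨ ∃ z, stepsLE S' m x z ∧ S' z y


section Aux
variable {W : Type} (R S : W → W → Prop) (V : Nat → W → Prop) (N : Nat → W)

def pathR : List Bool → W → W → Prop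
  | [], x, y => x = y
  | (b :: l), x, y => ∃ z, (if b then R x z else S x z) ∧ pathR l z y

lemma satH_imp (x : W) (φ ψ : MH) :
    satH R S V N x (MH.imp φ ψ) ↔ (satH R S V N x φ → satH R S V N x ψ) := by
  simp only [MH.imp, MH.or, satH]
  tauto

lemma satH_diah (x : W) (φ : MH) :
    satH R S V N x (MH.diah φ) ↔ ∃ y, S x y ∧ satH R S V N y φ := by
  simp only [MH.diah, satH]
  constructor
  · intro h; push_neg at h; exact h
  · rintro ⟨y, hy, h⟩ hall; exact hall y hy h

lemma satH_dia (x : W) (φ : MH) :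
    satH R S V N x (MH.dia φ) ↔ ∃ y, R x y ∧ satH R S V N y φ := by
  simp only [MH.dia, satH]
  constructor
  · intro h; push_neg at h; exact h
  · rintro ⟨y, hy, h⟩ hall; exact hall y hy h

lemma satH_diah_nom (x : W) :
    satH R S V N x (MH.diah (MH.nom 0)) ↔ S x (N 0) := by
  rw [satH_diah]
  constructor
  · rintro ⟨y, hy, h⟩; simp [satH] at h; subst h; exact hy
  · intro h; exact ⟨N 0, h, rfl⟩

lemma pathR_append (l : List Bool) (b : Bool) :
    ∀ x y : W, pathR R S (l ++ [b]) x y ↔ ∃ z, pathR R S l x z ∧ (if b then R z y else S z y) := by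
  induction l with
  | nil => intro x y; simp [pathR]
  | cons c l ih =>
      intro x y
      constructor
      · rintro ⟨z, hz, hp⟩
        obtain ⟨w, h1, h2⟩ := (ih z y).mp hp
        exact ⟨w, ⟨z, hz, h1⟩, h2⟩
      · rintro ⟨w, ⟨z, hz, h1⟩, h2⟩
        exact ⟨z, hz, (ih z y).mpr ⟨w, h1, h2⟩⟩

lemma exists_path (m : Nat) :
    ∀ x y : W, stepsLE (fun u v => R u v ∨ S u v) m x y →
      ∃ l : List Bool, l.length ≤ m ∧ pathR R S l x y := by
  induction m with
  | zero => intro x y h; exact ⟨[], by simp, h⟩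
  | succ m ih =>
      intro x y h
      rcases h with h | ⟨z, hz, hs⟩
      · obtain ⟨l, hl, hp⟩ := ih x y h
        exact ⟨l, Nat.le_succ_of_le hl, hp⟩
      · obtain ⟨l, hl, hp⟩ := ih x z hz
        rcases hs with hs | hs
        · exact ⟨l ++ [true], by simpa using Nat.succ_le_succ hl,
            (pathR_append R S l true x y).mpr ⟨z, hp, by simpa using hs⟩⟩
        · exact ⟨l ++ [false], by simpa using Nat.succ_le_succ hl,
            (pathR_append R S l false x y).mpr ⟨z, hp, by simpa using hs⟩⟩

lemma mbox_along (l : List Bool) :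
    ∀ (x y : W) (ψ : MH), pathR R S l x y →
      satH R S V N x (Mbox l ψ) → satH R S V N y ψ := by
  induction l with
  | nil => intro x y ψ hp h; cases hp; exact h
  | cons b l ih =>
      intro x y ψ hp h
      obtain ⟨z, hz, hp'⟩ := hp
      cases b with
      | true => exact ih z y ψ hp' (h z (by simpa using hz))
      | false => exact ih z y ψ hp' (h z (by simpa using hz))

lemma mdia_along (l : List Bool) :
    ∀ (x y : W) (ψ : MH), pathR R S l x y →
      satH R S V N y ψ → satH R S V N x (Mdia l ψ) := by
  induction l with
  | nil => intro x y ψ hp h; cases hp; exact h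
  | cons b l ih =>
      intro x y ψ hp h
      obtain ⟨z, hz, hp'⟩ := hp
      cases b with
      | true =>
          show satH R S V N x (MH.dia (Mdia l ψ))
          exact (satH_dia R S V N x _).mpr ⟨z, by simpa using hz, ih z y ψ hp' h⟩
      | false =>
          show satH R S V N x (MH.diah (Mdia l ψ))
          exact (satH_diah R S V N x _).mpr ⟨z, by simpa using hz, ih z y ψ hp' h⟩

end Aux

/-- if Nom is true at x₀ then, for every formula φ and every point x of
distance ≤ 6 from x₀, x₀ ⊨ ∃φ iff x ⊨ ∃φ. -/
theorem uEx_local_constancy :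
    ∀ (W : Type) (R S : W → W → Prop) (V : Nat → W → Prop) (N : Nat → W) (x₀ : W),
      SatNom R S V N x₀ →
      ∀ (φ : MH) (x : W), stepsLE (fun u v => R u v ∨ S u v) 6 x₀ x →
        (satH R S V N x₀ (MH.uEx φ) ↔ satH R S V N x (MH.uEx φ)) := by
  intro W R S V N x₀ hNom φ x hx
  obtain ⟨l, hl, hp⟩ := exists_path R S 6 x₀ x hx
  have hS : S x₀ (N 0) ↔ S x (N 0) := by
    constructor
    · intro h
      have h1 := (satH_imp R S V N x₀ _ _).mp (hNom l hl).1
        ((satH_diah_nom R S V N x₀).mpr h)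
      exact (satH_diah_nom R S V N x).mp (mbox_along R S V N l x₀ x _ hp h1)
    · intro h
      have h1 := mdia_along R S V N l x₀ x _ hp ((satH_diah_nom R S V N x).mpr h)
      exact (satH_diah_nom R S V N x₀).mp ((satH_imp R S V N x₀ _ _).mp (hNom l hl).2 h1)
  have key : ∀ y : W, satH R S V N y (MH.uEx φ) ↔
      (S y (N 0) ∧ ∃ z, S (N 0) z ∧ satH R S V N z φ) := by
    intro y
    show satH R S V N y (MH.diah _) ↔ _
    rw [satH_diah]
    constructor
    · rintro ⟨w, hw, h1, h2⟩
      simp only [satH] at h1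
      subst h1
      exact ⟨hw, (satH_diah R S V N _ _).mp h2⟩
    · rintro ⟨h1, h2⟩
      exact ⟨N 0, h1, rfl, (satH_diah R S V N _ _).mpr h2⟩
  rw [key, key, hS]
end
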